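/- Let F_q be a finite field of odd characteristic, d ≥ 4 even, χ a nontrivial additive character, and S_0 = {m ∈ F_q^d : m₁²+⋯+m_d² = 0}. If x ∈ F_q^d satisfies ‖x‖ = x₁²+⋯+x_d² ≠ 0, then |Σ_{m∈S_0} χ(-x·m)| = q^{(d-2)/2}. -/

import Mathlib

/-!
Detecting the sphere by orthogonality, `q • S = ∑ₜ ∑ₘ χ (t ‖m‖ - x ⬝ m)`, and the inner sum
factors over the coordinates into one-variable quadratic sums. For `t ≠ 0`, completing the
square evaluates each of them as `χ (-x_k² / 4t) η(t) G`, with `η` the quadratic character and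
`G` its Gauss sum; since `d` is even the factors `η(t)` cancel, while for `t = 0` the product
vanishes because `x ≠ 0`. As `t ↦ -‖x‖ / 4t` permutes `Fˣ`, the sum over `t ≠ 0` is `-1`,
so `q • S = -G ^ d`, and `|G|² = q` gives `|S| = q ^ (d / 2 - 1)`.
-/

open Finset

namespace AddChar

lemma map_sum_eq_prod {A M ι : Type*} [AddCommMonoid A] [CommMonoid M] (ψ : AddChar A M)
    (s : Finset ι) (f : ι → A) : ψ (∑ i ∈ s, f i) = ∏ i ∈ s, ψ (f i) :=
  map_prod ψ.toMonoidHom (fun i => Multiplicative.ofAdd (f i)) s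

variable {F R : Type*} [Field F] [Fintype F] [CommRing R] [IsDomain R] {ψ : AddChar F R}

/-- `t ↦ c / t` is an involution of `F` (with `c / 0 = 0`), so it only permutes the sum. -/
lemma sum_apply_div_eq_zero (hψ : ψ ≠ 1) {c : F} (hc : c ≠ 0) : ∑ t, ψ (c / t) = 0 := by
  rw [← sum_eq_zero_of_ne_one hψ]
  exact Equiv.sum_comp (Function.Involutive.toPerm _ fun t => div_div_cancel₀ hc) ψ

lemma card_mul_sum_filter_eq_zero [DecidableEq F] {α : Type*} [Fintype α] (hψ : ψ ≠ 1)
    (g : α → F) (f : α → R) :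
    Fintype.card F * ∑ m ∈ univ.filter (fun m => g m = 0), f m =
      ∑ t, ∑ m, ψ (t * g m) * f m := by
  have hprim : ψ.IsPrimitive := IsPrimitive.of_ne_one hψ
  rw [Finset.sum_comm, Finset.mul_sum, Finset.sum_filter]
  refine Finset.sum_congr rfl fun m _ => ?_
  rw [← Finset.sum_mul, sum_mulShift _ hprim]
  split_ifs <;> simp

end AddChar

open AddChar

section

variable {F : Type*} [Field F] [Fintype F] [DecidableEq F]

local notation "η" => MulChar.ringHomComp (quadraticChar F) (Int.castRingHom ℂ)

lemma quadraticChar_ringHomComp_sq {b : F} (hb : b ≠ 0) : η b ^ 2 = 1 := by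
  change ((quadraticChar F b : ℤ) : ℂ) ^ 2 = 1
  exact_mod_cast quadraticChar_sq_one hb

omit [Fintype F] [DecidableEq F] in
lemma four_ne_zero_of_ringChar_ne_two (hF : ringChar F ≠ 2) : (4 : F) ≠ 0 := by
  rw [show (4 : F) = 2 * 2 by norm_num]
  exact mul_ne_zero (Ring.two_ne_zero hF) (Ring.two_ne_zero hF)

variable (hF : ringChar F ≠ 2) {χ : AddChar F ℂ} (hχ : χ ≠ 1)
include hF hχ

lemma sum_addChar_mul_sq {b : F} (hb : b ≠ 0) :
    ∑ y, χ (b * y ^ 2) = η b * gaussSum η χ := by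
  have hprim : χ.IsPrimitive := IsPrimitive.of_ne_one hχ
  have hsqrts (a : F) : (#{y | y ^ 2 = a} : ℂ) = η a + 1 := by
    have h := quadraticChar_card_sqrts hF a
    rw [Set.toFinset_ofPred] at h
    change _ = ((quadraticChar F a : ℤ) : ℂ) + 1
    exact_mod_cast h
  -- group `y` by the value `a = y ^ 2`, which is hit `η a + 1` times
  have hfiber : ∑ y, χ (b * y ^ 2) = ∑ a, (η a + 1) * χ (b * a) := by
    rw [← Finset.sum_fiberwise univ (· ^ 2) (fun y => χ (b * y ^ 2))]
    refine Finset.sum_congr rfl fun a _ => ?_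
    rw [← hsqrts, ← nsmul_eq_mul, ← Finset.sum_const]
    exact Finset.sum_congr rfl fun y hy => by rw [(Finset.mem_filter.mp hy).2]
  have hshift : ∑ a, χ (b * a) = 0 := by
    simp_rw [mul_comm b]
    rw [sum_mulShift b hprim, if_neg hb, Nat.cast_zero]
  have hgauss : η b * gaussSum η (mulShift χ b) = gaussSum η χ := by
    simpa using gaussSum_mulShift η χ (Units.mk0 b hb)
  calc ∑ y, χ (b * y ^ 2)
      = gaussSum η (mulShift χ b) := by
        simp [hfiber, add_mul, Finset.sum_add_distrib, hshift, gaussSum, mulShift_apply]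
    _ = η b * gaussSum η χ := by
        rw [← hgauss, ← mul_assoc, ← sq, quadraticChar_ringHomComp_sq hb, one_mul]

lemma sum_addChar_quadratic {t : F} (ht : t ≠ 0) (c : F) :
    ∑ y, χ (t * y ^ 2 + c * y) = χ (-(c ^ 2 / (4 * t))) * (η t * gaussSum η χ) := by
  have h2 : (2 : F) ≠ 0 := Ring.two_ne_zero hF
  have h4 : (4 : F) ≠ 0 := four_ne_zero_of_ringChar_ne_two hF
  have hsquare (y : F) :
      t * y ^ 2 + c * y = t * (y + c / (2 * t)) ^ 2 + -(c ^ 2 / (4 * t)) := by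
    field_simp
    ring
  simp_rw [hsquare, map_add_eq_mul, ← Finset.sum_mul]
  rw [Fintype.sum_equiv (Equiv.addRight (c / (2 * t))) (fun y => χ (t * (y + c / (2 * t)) ^ 2))
      (fun z => χ (t * z ^ 2)) fun _ => rfl,
    sum_addChar_mul_sq hF hχ ht, mul_comm]

lemma norm_gaussSum_sq : ‖gaussSum η χ‖ ^ 2 = Fintype.card F := by
  have hη : η ≠ 1 :=
    (MulChar.ringHomComp_ne_one_iff (RingHom.injective_int _)).mpr (quadraticChar_ne_one hF)
  have hsq := congrArg norm <|
    gaussSum_sq hη ((quadraticChar_isQuadratic F).comp _) (IsPrimitive.of_ne_one hχ)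
  have hneg : ‖η (-1)‖ = 1 := by
    rw [← pow_eq_one_iff_of_nonneg (norm_nonneg _) two_ne_zero, ← norm_pow,
      quadraticChar_ringHomComp_sq (neg_ne_zero.mpr one_ne_zero), norm_one]
  rwa [norm_pow, norm_mul, hneg, one_mul, Complex.norm_natCast] at hsq

lemma norm_gaussSum_pow_of_even {n : ℕ} (hn : Even n) :
    ‖gaussSum η χ‖ ^ n = (Fintype.card F : ℝ) ^ (n / 2) := by
  obtain ⟨k, rfl⟩ := hn
  rw [← two_mul, pow_mul, norm_gaussSum_sq hF hχ, Nat.mul_div_cancel_left k two_pos]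

lemma prod_sum_addChar_quadratic {ι : Type*} [Fintype ι] (hι : Even (Fintype.card ι))
    {t : F} (ht : t ≠ 0) (c : ι → F) :
    ∏ k, ∑ y, χ (t * y ^ 2 + c k * y) =
      χ (-(∑ k, c k ^ 2) / (4 * t)) * gaussSum η χ ^ Fintype.card ι := by
  have hη : η t ^ Fintype.card ι = 1 := by
    obtain ⟨n, hn⟩ := hι.two_dvd
    rw [hn, pow_mul, quadraticChar_ringHomComp_sq ht, one_pow]
  simp_rw [sum_addChar_quadratic hF hχ ht]
  rw [Finset.prod_mul_distrib, ← map_sum_eq_prod, Finset.prod_const, Finset.card_univ,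
    mul_pow, hη, one_mul, Finset.sum_neg_distrib, ← Finset.sum_div, neg_div]

lemma card_mul_sum_sphere_zero {ι : Type*} [Fintype ι] [DecidableEq ι] (hι : Even (Fintype.card ι))
    {x : ι → F} (hx : ∑ k, x k ^ 2 ≠ 0) :
    (Fintype.card F : ℂ) *
        ∑ m ∈ univ.filter (fun m : ι → F => ∑ k, m k ^ 2 = 0), χ (-(∑ k, x k * m k)) =
      -gaussSum η χ ^ Fintype.card ι := by
  set c : F := -(∑ k, x k ^ 2) / 4
  have hfactor (t : F) : ∑ m : ι → F, χ (t * ∑ k, m k ^ 2) * χ (-(∑ k, x k * m k)) =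
      ∏ k, ∑ y, χ (t * y ^ 2 + -x k * y) := by
    rw [Fintype.prod_sum]
    refine Finset.sum_congr rfl fun m _ => ?_
    rw [← map_add_eq_mul, ← map_sum_eq_prod, Finset.mul_sum, ← Finset.sum_neg_distrib,
      ← Finset.sum_add_distrib]
    exact congrArg χ (Finset.sum_congr rfl fun k _ => by ring)
  -- at `t = 0` the product vanishes while `χ (c / 0) = χ 0 = 1`
  have hterm (t : F) : ∏ k, ∑ y, χ (t * y ^ 2 + -x k * y) =
      (χ (c / t) - if t = 0 then 1 else 0) * gaussSum η χ ^ Fintype.card ι := by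
    by_cases ht : t = 0
    · obtain ⟨k, hk⟩ : ∃ k, x k ≠ 0 := by
        by_contra! h
        exact hx (Finset.sum_eq_zero fun k _ => by simp [h k])
      refine (Finset.prod_eq_zero (Finset.mem_univ k) ?_).trans (by simp [ht])
      simp_rw [ht, zero_mul, zero_add, mul_comm (-x k)]
      rw [sum_mulShift _ (IsPrimitive.of_ne_one hχ), if_neg (neg_ne_zero.mpr hk), Nat.cast_zero]
    · rw [prod_sum_addChar_quadratic hF hχ hι ht, if_neg ht, sub_zero]
      simp_rw [neg_sq, ← div_div]
      rfl
  have hc : c ≠ 0 := div_ne_zero (neg_ne_zero.mpr hx) (four_ne_zero_of_ringChar_ne_two hF)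
  rw [card_mul_sum_filter_eq_zero hχ]
  simp_rw [hfactor, hterm, ← Finset.sum_mul, Finset.sum_sub_distrib, sum_apply_div_eq_zero hχ hc,
    Finset.sum_ite_eq', if_pos (Finset.mem_univ _)]
  ring

end

/-- For `d ≥ 4` even and `x` with `‖x‖ = ∑ x_k² ≠ 0`, the Fourier transform of the
zero sphere has absolute value exactly `q^{(d-2)/2}`. -/
theorem fourier_zero_sphere_abs (F : Type*) [Field F] [Fintype F] [DecidableEq F]
    (hF : ringChar F ≠ 2) (χ : AddChar F ℂ) (hχ : χ ≠ 1)
    (d : ℕ) (hd : 4 ≤ d) (hde : Even d) (x : Fin d → F) (hx : ∑ k, x k ^ 2 ≠ 0) :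
    ‖∑ m ∈ Finset.univ.filter (fun m : Fin d → F => ∑ k, m k ^ 2 = 0),
        χ (-(∑ k, x k * m k))‖ = (Fintype.card F : ℝ) ^ ((d - 2) / 2) := by
  have hq : (0 : ℝ) < Fintype.card F := mod_cast Fintype.card_pos
  have hde' : Even (Fintype.card (Fin d)) := by rwa [Fintype.card_fin]
  have hS := congrArg norm (card_mul_sum_sphere_zero hF hχ hde' hx)
  rw [norm_mul, Complex.norm_natCast, norm_neg, norm_pow, norm_gaussSum_pow_of_even hF hχ hde',
    Fintype.card_fin] at hS
  refine mul_left_cancel₀ hq.ne' (hS.trans ?_)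
  rw [← pow_succ']
  congr 1
  omega
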